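/- Let a b : α with a ≠ b. For every n ≥ 1, the Levenshtein distance between ([b, a])^n and ([a, b])^n equals 2, i.e., levenshtein (([b, a])^n) (([a, b])^n) = 2. -/

import Mathlib

/-- Mathlib's former `Levenshtein.Cost` (removed from Mathlib since), restored verbatim. -/
structure Levenshtein.Cost (α β δ : Type*) where
  delete : α → δ
  insert : β → δ
  substitute : α → β → δ

/-- Mathlib's former `Levenshtein.defaultCost`. -/
def Levenshtein.defaultCost {α : Type*} [DecidableEq α] : Levenshtein.Cost α α ℕ where
  delete _ := 1
  insert _ := 1
  substitute a b := if a = b then 0 else 1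

/-- Mathlib's former `Levenshtein.impl`. -/
def Levenshtein.impl {α β δ : Type*} [AddZeroClass δ] [Min δ] (C : Levenshtein.Cost α β δ)
    (xs : List α) (y : β) (d : {r : List δ // 0 < r.length}) : {r : List δ // 0 < r.length} :=
  let ⟨ds, w⟩ := d
  xs.zip (ds.zip ds.tail) |>.foldr
    (init := ⟨[C.insert y + ds.getLast (List.ne_nil_of_length_pos w)], by simp⟩)
    (fun ⟨x, d₀, d₁⟩ ⟨r, w⟩ =>
      ⟨min (C.delete x + r[0]) (min (C.insert y + d₀) (C.substitute x y + d₁)) :: r, by simp⟩)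

/-- Mathlib's former `suffixLevenshtein`. -/
def suffixLevenshtein {α β δ : Type*} [AddZeroClass δ] [Min δ] (C : Levenshtein.Cost α β δ)
    (xs : List α) (ys : List β) : {r : List δ // 0 < r.length} :=
  ys.foldr
    (Levenshtein.impl C xs)
    (xs.foldr (init := ⟨[0], by simp⟩) (fun a ⟨r, w⟩ => ⟨(C.delete a + r[0]) :: r, by simp⟩))

/-- Mathlib's former `levenshtein`. -/
def levenshtein {α β δ : Type*} [AddZeroClass δ] [Min δ] (C : Levenshtein.Cost α β δ)
    (xs : List α) (ys : List β) : δ :=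
  let ⟨r, w⟩ := suffixLevenshtein C xs ys
  r[0]

/-- `wpow u k` is the k-fold concatenation `u ++ u ++ ⋯ ++ u` (k copies). -/
def wpow {α : Type*} (u : List α) (k : ℕ) : List α := (List.replicate k u).flatten

/-!
Write `w = a (ba)^(n-1)`. Then `(ba)^n = b w` and `(ab)^n = w b`, so deleting the leading `b` and
appending a `b` gives distance at most `2`. Conversely, expand the first step of the Levenshtein
recurrence on `b w` versus `a w'` with `w' = b (ab)^(n-1)`: a deletion or insertion leaves words of
different lengths, and a substitution leaves `w ≠ w'`, so every branch costs `1` plus a positive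
distance.
-/

namespace Levenshtein

section Recurrence

variable {α β δ : Type*} [AddZeroClass δ] [Min δ] (C : Cost α β δ)

theorem impl_cons (x : α) (xs : List α) (y : β) (d : δ) (ds : List δ)
    (w : 0 < (d :: ds).length) (w' : 0 < ds.length) :
    impl C (x :: xs) y ⟨d :: ds, w⟩ =
      ⟨min (C.delete x + (impl C xs y ⟨ds, w'⟩).1[0]'(impl C xs y ⟨ds, w'⟩).2)
        (min (C.insert y + d) (C.substitute x y + ds[0])) :: (impl C xs y ⟨ds, w'⟩).1,
        by simp⟩ :=
  match ds, w' with | _ :: _, _ => rfl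

theorem levenshtein_eq_getElem_suffixLevenshtein (xs : List α) (ys : List β) :
    levenshtein C xs ys = (suffixLevenshtein C xs ys).1[0]'(suffixLevenshtein C xs ys).2 := rfl

theorem suffixLevenshtein_nil_cons (y : β) (ys : List β) :
    (suffixLevenshtein C [] (y :: ys)).1 =
      [C.insert y + (suffixLevenshtein C [] ys).1.getLast
        (List.ne_nil_of_length_pos (suffixLevenshtein C [] ys).2)] := rfl

theorem suffixLevenshtein_nil' (ys : List β) :
    (suffixLevenshtein C [] ys).1 = [levenshtein C [] ys] := by
  induction ys with
  | nil => rfl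
  | cons y ys ih =>
    rw [levenshtein_eq_getElem_suffixLevenshtein C [] (y :: ys)]
    simp only [suffixLevenshtein_nil_cons, ih, List.getLast_singleton, List.getElem_cons_zero]

theorem levenshtein_nil_nil : levenshtein C [] [] = 0 := rfl

theorem levenshtein_nil_cons (y : β) (ys : List β) :
    levenshtein C [] (y :: ys) = C.insert y + levenshtein C [] ys := by
  have h := suffixLevenshtein_nil' C (y :: ys)
  rw [suffixLevenshtein_nil_cons] at h
  simpa only [suffixLevenshtein_nil', List.getLast_singleton, List.cons.injEq, and_true] using h.symm

theorem levenshtein_cons_nil (x : α) (xs : List α) :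
    levenshtein C (x :: xs) [] = C.delete x + levenshtein C xs [] := rfl

theorem suffixLevenshtein_cons_cons (x : α) (xs : List α) (y : β) (ys : List β)
    (h : (suffixLevenshtein C (x :: xs) ys).1 =
      levenshtein C (x :: xs) ys :: (suffixLevenshtein C xs ys).1) :
    (suffixLevenshtein C (x :: xs) (y :: ys)).1 =
      min (C.delete x + levenshtein C xs (y :: ys))
        (min (C.insert y + levenshtein C (x :: xs) ys) (C.substitute x y + levenshtein C xs ys))
        :: (suffixLevenshtein C xs (y :: ys)).1 := by
  have e : suffixLevenshtein C (x :: xs) ys =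
      ⟨levenshtein C (x :: xs) ys :: (suffixLevenshtein C xs ys).1, by simp⟩ := Subtype.ext h
  show (impl C (x :: xs) y (suffixLevenshtein C (x :: xs) ys)).1 = _
  rw [e, impl_cons C x xs y _ _ _ (suffixLevenshtein C xs ys).2]
  rfl

theorem suffixLevenshtein_cons₁ (x : α) (xs : List α) (ys : List β) :
    (suffixLevenshtein C (x :: xs) ys).1 =
      levenshtein C (x :: xs) ys :: (suffixLevenshtein C xs ys).1 := by
  induction ys with
  | nil => rfl
  | cons y ys ih =>
    have step := suffixLevenshtein_cons_cons C x xs y ys ih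
    rw [step, levenshtein_eq_getElem_suffixLevenshtein C (x :: xs) (y :: ys)]
    simp only [step, List.getElem_cons_zero]

theorem levenshtein_cons_cons (x : α) (xs : List α) (y : β) (ys : List β) :
    levenshtein C (x :: xs) (y :: ys) =
      min (C.delete x + levenshtein C xs (y :: ys))
        (min (C.insert y + levenshtein C (x :: xs) ys) (C.substitute x y + levenshtein C xs ys)) := by
  rw [levenshtein_eq_getElem_suffixLevenshtein]
  simp only [suffixLevenshtein_cons_cons C x xs y ys (suffixLevenshtein_cons₁ C x xs ys),
    List.getElem_cons_zero]

end Recurrence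

section DefaultCost

variable {α : Type*} [DecidableEq α]

@[simp] theorem defaultCost_delete (a : α) : (defaultCost : Cost α α ℕ).delete a = 1 := rfl

@[simp] theorem defaultCost_insert (a : α) : (defaultCost : Cost α α ℕ).insert a = 1 := rfl

@[simp] theorem defaultCost_substitute (a b : α) :
    (defaultCost : Cost α α ℕ).substitute a b = if a = b then 0 else 1 := rfl

theorem eq_of_levenshtein_eq_zero :
    ∀ {xs ys : List α}, levenshtein defaultCost xs ys = 0 → xs = ys
  | [], [], _ => rfl
  | [], y :: ys, h => by simp [levenshtein_nil_cons] at h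
  | x :: xs, [], h => by simp [levenshtein_cons_nil] at h
  | x :: xs, y :: ys, h => by
    simp only [levenshtein_cons_cons, defaultCost_delete, defaultCost_insert,
      defaultCost_substitute, Nat.min_eq_zero_iff, Nat.add_eq_zero_iff, one_ne_zero, false_and,
      false_or, ite_eq_left_iff, imp_false, not_not] at h
    rw [h.1, eq_of_levenshtein_eq_zero h.2]

theorem levenshtein_pos_of_ne {xs ys : List α} (h : xs ≠ ys) :
    0 < levenshtein defaultCost xs ys :=
  Nat.pos_of_ne_zero (mt eq_of_levenshtein_eq_zero h)

theorem levenshtein_cons_left_le (x : α) (xs ys : List α) :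
    levenshtein defaultCost (x :: xs) ys ≤ levenshtein defaultCost xs ys + 1 := by
  cases ys with
  | nil => simp [levenshtein_cons_nil, add_comm]
  | cons y ys => simp [levenshtein_cons_cons, add_comm]

theorem levenshtein_append_singleton_le_one (l : List α) (y : α) :
    levenshtein defaultCost l (l ++ [y]) ≤ 1 := by
  induction l with
  | nil => simp [levenshtein_nil_cons, levenshtein_nil_nil]
  | cons x l ih => simpa [levenshtein_cons_cons] using Or.inr (Or.inr ih)

theorem levenshtein_cons_append_singleton_le_two (x y : α) (l : List α) :
    levenshtein defaultCost (x :: l) (l ++ [y]) ≤ 2 :=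
  (levenshtein_cons_left_le x l _).trans
    (Nat.add_le_add_right (levenshtein_append_singleton_le_one l y) 1)

theorem two_le_levenshtein_cons_cons {x y : α} {xs ys : List α} (hlen : xs.length = ys.length)
    (hxy : x ≠ y) (hne : xs ≠ ys) :
    2 ≤ levenshtein defaultCost (x :: xs) (y :: ys) := by
  have hdel := levenshtein_pos_of_ne (xs := xs) (ys := y :: ys) fun h => by simp [h] at hlen
  have hins := levenshtein_pos_of_ne (xs := x :: xs) (ys := ys) fun h => by simp [← h] at hlen
  have hsub := levenshtein_pos_of_ne hne
  simp only [levenshtein_cons_cons, defaultCost_delete, defaultCost_insert,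
    defaultCost_substitute, if_neg hxy]
  omega

end DefaultCost

end Levenshtein

section WordPower

variable {α : Type*}

theorem wpow_succ (u : List α) (k : ℕ) : wpow u (k + 1) = u ++ wpow u k := by
  simp [wpow, List.replicate_succ]

theorem wpow_succ' (u : List α) (k : ℕ) : wpow u (k + 1) = wpow u k ++ u := by
  simp [wpow, List.replicate_succ']

theorem length_wpow (u : List α) (k : ℕ) : (wpow u k).length = k * u.length := by
  simp [wpow, List.length_flatten, List.map_replicate, List.sum_replicate]

theorem cons_wpow_pair (a b : α) (m : ℕ) : a :: wpow [b, a] m = wpow [a, b] m ++ [a] := by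
  induction m with
  | zero => rfl
  | succ k ih => simp [wpow_succ, ih]

end WordPower

open Levenshtein in
theorem stmt_14 {α : Type*} [DecidableEq α] (a b : α) (hab : a ≠ b) :
    ∀ n : ℕ, 1 ≤ n →
      levenshtein Levenshtein.defaultCost (wpow [b, a] n) (wpow [a, b] n) = 2 := by
  intro n hn
  obtain ⟨m, rfl⟩ : ∃ m, n = m + 1 := ⟨n - 1, by omega⟩
  have hba : wpow [b, a] (m + 1) = b :: a :: wpow [b, a] m := wpow_succ _ _
  apply le_antisymm
  · have hab' : wpow [a, b] (m + 1) = (a :: wpow [b, a] m) ++ [b] := by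
      simp [wpow_succ', cons_wpow_pair]
    rw [hba, hab']
    exact levenshtein_cons_append_singleton_le_two b b _
  · rw [hba, wpow_succ]
    exact two_le_levenshtein_cons_cons (by simp [length_wpow]) hab.symm (by simp [hab])
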